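/- arXiv:1701.03614 — 2 statements merged into one kernel-verified Lean document; each statement's English description precedes it below -/
import Mathlib

section
/- Let R ∈ ℝ^{n×n} be substochastic (R_{ij} ≥ 0, Σ_j R_{ij} ≤ 1 for all i) and outflow-connected (in the digraph with an edge (i,j) whenever R_{ij} > 0, every node i either satisfies Σ_j R_{ij} < 1 or has a directed path to some node j with Σ_k R_{jk} < 1). For each i let φ_i : [0,∞) → [0,∞) be continuously differentiable with φ_i(0) = 0, φ_i'(y) > 0 for all y ≥ 0, and sup_{y≥0} φ_i(y) = C_i ∈ (0,∞). Let u ∈ ℝⁿ₊ and suppose z* = (I − Rᵀ)⁻¹u satisfies z*_i < C_i for every i, and let x* be the unique point of ℝⁿ₊ with φ_i(x*_i) = z*_i for all i. Then x* is a globally asymptotically stable equilibrium of ẋ = u − (I − Rᵀ)φ(x) on ℝⁿ₊: every differentiable solution x : [0,∞) → ℝⁿ₊ converges to x* as t → ∞. -/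
/-!
Write `A = 1 - Rᵀ`. Outflow-connectedness makes every row sum of some power `R ^ M` smaller
than `1`; then the entries of `R ^ (M * k)` decay geometrically, so every column sum of some
power is smaller than `1` as well. Truncated Neumann series turn these into positive vectors
`z`, `w` with `R z < z` and `Rᵀ w < w`, and with `D = diag (z / w)` the quadratic form of `D A`
is coercive (weighted AM-GM on the cross terms). In particular `A` is invertible, and
`A φ(x*) = u`.

After extending each `φ i` to a continuous strictly increasing function on `ℝ`, the Lyapunov
function `V x = ∑ i, d i * ∫ s in x* i..x i, (φ i s - φ i (x* i))` satisfies
`V̇ = -⟪E, D A E⟫ ≤ -μ ‖E‖²` with `E = φ(x) - φ(x*)`. So `V` decreases along the trajectory,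
which therefore stays bounded; then `V ≤ C ‖E‖`, hence `V̇ ≤ -k V²`, so `V → 0` and `x → x*`.
-/

open Matrix Filter Topology

namespace Matrix

variable {ι : Type*} [Fintype ι]

lemma mulVec_mono_of_nonneg {A : Matrix ι ι ℝ} (hA : ∀ i j, 0 ≤ A i j) {v w : ι → ℝ}
    (hvw : v ≤ w) : A *ᵥ v ≤ A *ᵥ w := fun i =>
  Finset.sum_le_sum fun j _ => mul_le_mul_of_nonneg_left (hvw j) (hA i j)

lemma mulVec_one_apply (A : Matrix ι ι ℝ) (i : ι) : (A *ᵥ 1) i = ∑ j, A i j := by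
  simp [mulVec, dotProduct]

lemma sum_div_mul_mul_transpose_mulVec_le {R : Matrix ι ι ℝ} (hR : ∀ i j, 0 ≤ R i j)
    {z w : ι → ℝ} (hz : ∀ i, 0 ≤ z i) (hw : ∀ i, 0 < w i) (e : ι → ℝ) :
    ∑ i, z i / w i * e i * (Rᵀ *ᵥ e) i
      ≤ ∑ i, (z i * (Rᵀ *ᵥ w) i / (2 * w i ^ 2) + (R *ᵥ z) i / (2 * w i)) * e i ^ 2 := by
  have amgm : ∀ i j, e i * e j ≤ w j / (2 * w i) * e i ^ 2 + w i / (2 * w j) * e j ^ 2 := by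
    intro i j
    have := hw i; have := hw j
    rw [div_mul_eq_mul_div, div_mul_eq_mul_div, div_add_div _ _ (by positivity) (by positivity),
      le_div_iff₀ (by positivity)]
    nlinarith [sq_nonneg (w j * e i - w i * e j)]
  calc ∑ i, z i / w i * e i * (Rᵀ *ᵥ e) i = ∑ i, ∑ j, z i / w i * R j i * (e i * e j) := by
        simp only [mulVec, dotProduct, transpose_apply, Finset.mul_sum]
        exact Finset.sum_congr rfl fun i _ => Finset.sum_congr rfl fun j _ => by ring
    _ ≤ ∑ i, ∑ j, z i / w i * R j i *
          (w j / (2 * w i) * e i ^ 2 + w i / (2 * w j) * e j ^ 2) := by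
        gcongr with i _ j _
        · have := hw i; have := hz i; have := hR j i
          positivity
        · exact amgm i j
    _ = ∑ i, ∑ j, R j i * w j * (z i / (2 * w i ^ 2) * e i ^ 2)
        + ∑ i, ∑ j, R j i * z i * (e j ^ 2 / (2 * w j)) := by
        rw [← Finset.sum_add_distrib]
        refine Finset.sum_congr rfl fun i _ => ?_
        rw [← Finset.sum_add_distrib]
        refine Finset.sum_congr rfl fun j _ => ?_
        have := (hw i).ne'; have := (hw j).ne'
        field_simp
    _ = ∑ i, (z i * (Rᵀ *ᵥ w) i / (2 * w i ^ 2) + (R *ᵥ z) i / (2 * w i)) * e i ^ 2 := by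
        rw [Finset.sum_comm (f := fun i j => R j i * z i * (e j ^ 2 / (2 * w j))),
          ← Finset.sum_add_distrib]
        refine Finset.sum_congr rfl fun i _ => ?_
        simp only [mulVec, dotProduct, transpose_apply, ← Finset.sum_mul]
        ring

def OutflowConnected (R : Matrix ι ι ℝ) : Prop :=
  ∀ i, ∃ j, Relation.ReflTransGen (fun a b => 0 < R a b) i j ∧ ∑ k, R j k < 1

variable [DecidableEq ι]

section Substochastic

variable {R : Matrix ι ι ℝ}

lemma pow_mulVec_one_le_one (hnn : ∀ i j, 0 ≤ R i j) (hsub : ∀ i, ∑ j, R i j ≤ 1) (k : ℕ) :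
    R ^ k *ᵥ 1 ≤ 1 := by
  induction k with
  | zero => simp
  | succ k ih =>
    rw [pow_succ', ← mulVec_mulVec]
    refine (mulVec_mono_of_nonneg hnn ih).trans fun i => ?_
    simpa [mulVec_one_apply] using hsub i

lemma antitone_pow_mulVec_one (hnn : ∀ i j, 0 ≤ R i j) (hsub : ∀ i, ∑ j, R i j ≤ 1) :
    Antitone fun k => R ^ k *ᵥ 1 := by
  refine antitone_nat_of_succ_le fun k => ?_
  rw [pow_succ, ← mulVec_mulVec]
  refine mulVec_mono_of_nonneg (pow_apply_nonneg hnn k) fun i => ?_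
  simpa [mulVec_one_apply] using hsub i

lemma exists_pow_mulVec_one_lt_one_of_reflTransGen (hnn : ∀ i j, 0 ≤ R i j)
    (hsub : ∀ i, ∑ j, R i j ≤ 1) {i j : ι}
    (hij : Relation.ReflTransGen (fun a b => 0 < R a b) i j) (hj : ∑ k, R j k < 1) :
    ∃ m, (R ^ m *ᵥ 1) i < 1 := by
  induction hij using Relation.ReflTransGen.head_induction_on with
  | refl => exact ⟨1, by simpa [mulVec_one_apply] using hj⟩
  | @head a b hab _ ih =>
    obtain ⟨m, hm⟩ := ih
    refine ⟨m + 1, ?_⟩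
    rw [pow_succ', ← mulVec_mulVec]
    calc ∑ l, R a l * (R ^ m *ᵥ 1) l < ∑ l, R a l * 1 :=
          Finset.sum_lt_sum
            (fun l _ => mul_le_mul_of_nonneg_left (pow_mulVec_one_le_one hnn hsub m l) (hnn a l))
            ⟨b, Finset.mem_univ b, mul_lt_mul_of_pos_left hm hab⟩
      _ ≤ 1 := by simpa using hsub a

lemma exists_pow_mulVec_one_lt_one (hnn : ∀ i j, 0 ≤ R i j) (hsub : ∀ i, ∑ j, R i j ≤ 1)
    (hout : OutflowConnected R) : ∃ M, ∀ i, (R ^ M *ᵥ 1) i < 1 := by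
  have hlt : ∀ i, ∃ m, (R ^ m *ᵥ 1) i < 1 := fun i => by
    obtain ⟨j, hij, hj⟩ := hout i
    exact exists_pow_mulVec_one_lt_one_of_reflTransGen hnn hsub hij hj
  choose m hm using hlt
  exact ⟨Finset.univ.sup m, fun i =>
    (antitone_pow_mulVec_one hnn hsub (Finset.le_sup (Finset.mem_univ i)) i).trans_lt (hm i)⟩

end Substochastic

section Nonneg

variable {A : Matrix ι ι ℝ}

lemma exists_pos_mulVec_lt (hA : ∀ i j, 0 ≤ A i j) {M : ℕ} (hM : ∀ i, (A ^ M *ᵥ 1) i < 1) :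
    ∃ z : ι → ℝ, (∀ i, 0 < z i) ∧ ∀ i, (A *ᵥ z) i < z i := by
  set z := (∑ l ∈ Finset.range M, A ^ l) *ᵥ 1
  refine ⟨z, fun i => ?_, fun i => ?_⟩
  · have hM0 : 0 < M := Nat.pos_of_ne_zero fun h => by simpa [h] using hM i
    have hterm : ∀ l, 0 ≤ (A ^ l *ᵥ 1) i := fun l => by
      rw [mulVec_one_apply]
      exact Finset.sum_nonneg fun j _ => pow_apply_nonneg hA l i j
    calc (0 : ℝ) < (A ^ 0 *ᵥ 1) i := by simp
      _ ≤ ∑ l ∈ Finset.range M, (A ^ l *ᵥ 1) i :=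
          Finset.single_le_sum (fun l _ => hterm l) (Finset.mem_range.2 hM0)
      _ = z i := by simp [z, sum_mulVec]
  · have hz : (1 - A) *ᵥ z = 1 - A ^ M *ᵥ 1 := by
      rw [mulVec_mulVec, mul_neg_geom_sum, sub_mulVec, one_mulVec]
    rw [sub_mulVec, one_mulVec] at hz
    have := congrFun hz i
    simp only [Pi.sub_apply, Pi.one_apply] at this
    linarith [hM i]

lemma exists_transpose_pow_mulVec_one_lt_one (hA : ∀ i j, 0 ≤ A i j) {M : ℕ}
    (hM : ∀ i, (A ^ M *ᵥ 1) i < 1) : ∃ N, ∀ i, (Aᵀ ^ N *ᵥ 1) i < 1 := by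
  rcases isEmpty_or_nonempty ι with _ | _
  · exact ⟨0, isEmptyElim⟩
  obtain ⟨i₀, hi₀⟩ := Finite.exists_max fun i => (A ^ M *ᵥ 1) i
  set θ := (A ^ M *ᵥ 1) i₀
  have hθ : 0 ≤ θ := by
    rw [show θ = _ from mulVec_one_apply _ i₀]
    exact Finset.sum_nonneg fun j _ => pow_apply_nonneg hA M i₀ j
  have hgeom : ∀ k, A ^ (M * k) *ᵥ 1 ≤ fun _ => θ ^ k := by
    intro k
    induction k with
    | zero => intro i; simp
    | succ k ih =>
      intro i
      rw [Nat.mul_succ, add_comm, pow_add, ← mulVec_mulVec]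
      calc (A ^ M *ᵥ A ^ (M * k) *ᵥ 1) i ≤ (A ^ M *ᵥ fun _ => θ ^ k) i :=
            mulVec_mono_of_nonneg (pow_apply_nonneg hA M) ih i
        _ = θ ^ k * (A ^ M *ᵥ 1) i := by simp [mulVec, dotProduct, Finset.sum_mul, mul_comm]
        _ ≤ θ ^ (k + 1) := by
          rw [pow_succ]
          exact mul_le_mul_of_nonneg_left (hi₀ i) (by positivity)
  have hcard : (0 : ℝ) < Fintype.card ι := by exact_mod_cast Fintype.card_pos
  obtain ⟨k, hk⟩ := exists_pow_lt_of_lt_one (inv_pos.2 hcard) (hM i₀)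
  refine ⟨M * k, fun i => ?_⟩
  rw [← transpose_pow, mulVec_one_apply]
  calc ∑ j, (A ^ (M * k))ᵀ i j ≤ ∑ _j : ι, θ ^ k := Finset.sum_le_sum fun j _ => by
        refine le_trans ?_ (hgeom k j)
        rw [transpose_apply, mulVec_one_apply]
        exact Finset.single_le_sum (fun l _ => pow_apply_nonneg hA _ j l) (Finset.mem_univ i)
    _ = Fintype.card ι * θ ^ k := by simp
    _ < Fintype.card ι * (Fintype.card ι : ℝ)⁻¹ := mul_lt_mul_of_pos_left hk hcard
    _ = 1 := mul_inv_cancel₀ hcard.ne'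

end Nonneg

variable {R : Matrix ι ι ℝ}

lemma exists_coercive_one_sub_transpose_of_mulVec_lt (hR : ∀ i j, 0 ≤ R i j) {z w : ι → ℝ}
    (hz : ∀ i, 0 < z i) (hw : ∀ i, 0 < w i) (hRz : ∀ i, (R *ᵥ z) i < z i)
    (hRw : ∀ i, (Rᵀ *ᵥ w) i < w i) :
    ∃ μ > 0, ∀ e : ι → ℝ, μ * ∑ i, e i ^ 2 ≤ ∑ i, z i / w i * e i * ((1 - Rᵀ) *ᵥ e) i := by
  set c : ι → ℝ := fun i => z i / w i - (z i * (Rᵀ *ᵥ w) i / (2 * w i ^ 2) + (R *ᵥ z) i / (2 * w i))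
  have hc : ∀ i, 0 < c i := fun i => by
    have := hw i
    have : z i * (Rᵀ *ᵥ w) i + (R *ᵥ z) i * w i < 2 * (z i * w i) := by
      nlinarith [mul_lt_mul_of_pos_left (hRw i) (hz i), mul_lt_mul_of_pos_right (hRz i) (hw i)]
    have hci : c i
        = (2 * (z i * w i) - (z i * (Rᵀ *ᵥ w) i + (R *ᵥ z) i * w i)) / (2 * w i ^ 2) := by
      simp only [c]
      field_simp
    rw [hci]
    exact div_pos (sub_pos.2 this) (by positivity)
  obtain ⟨μ, hμ, hμc⟩ : ∃ μ : ℝ, 0 < μ ∧ ∀ i, μ ≤ c i :=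
    ((eventually_mem_nhdsWithin (s := Set.Ioi 0)).and
      (nhdsWithin_le_nhds (eventually_all.2 fun i => eventually_le_nhds (hc i)))).exists
  refine ⟨μ, hμ, fun e => ?_⟩
  have hcross := sum_div_mul_mul_transpose_mulVec_le hR (fun i => (hz i).le) hw e
  calc μ * ∑ i, e i ^ 2 ≤ ∑ i, c i * e i ^ 2 := by
        rw [Finset.mul_sum]
        exact Finset.sum_le_sum fun i _ => mul_le_mul_of_nonneg_right (hμc i) (sq_nonneg _)
    _ = ∑ i, z i / w i * e i * e i
          - ∑ i, (z i * (Rᵀ *ᵥ w) i / (2 * w i ^ 2) + (R *ᵥ z) i / (2 * w i)) * e i ^ 2 := by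
        rw [← Finset.sum_sub_distrib]
        exact Finset.sum_congr rfl fun i _ => by ring
    _ ≤ ∑ i, z i / w i * e i * ((1 - Rᵀ) *ᵥ e) i := by
        simp only [sub_mulVec, one_mulVec, Pi.sub_apply, mul_sub, Finset.sum_sub_distrib]
        linarith

lemma det_ne_zero_of_coercive {A : Matrix ι ι ℝ} {d : ι → ℝ} {μ : ℝ} (hμ : 0 < μ)
    (hA : ∀ e, μ * ∑ i, e i ^ 2 ≤ ∑ i, d i * e i * (A *ᵥ e) i) : A.det ≠ 0 := by
  intro hdet
  obtain ⟨v, hv, hAv⟩ := exists_mulVec_eq_zero_iff.2 hdet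
  have hsq : ∑ i, v i ^ 2 ≤ 0 := by
    have := hA v
    simp only [hAv, Pi.zero_apply, mul_zero, Finset.sum_const_zero] at this
    exact nonpos_of_mul_nonpos_right this hμ
  refine hv (funext fun i => pow_eq_zero_iff two_ne_zero |>.1 ?_)
  exact (Finset.sum_eq_zero_iff_of_nonneg fun j _ => sq_nonneg (v j)).1
    (le_antisymm hsq (Finset.sum_nonneg fun j _ => sq_nonneg (v j))) i (Finset.mem_univ i)

lemma OutflowConnected.exists_coercive_one_sub_transpose (hnn : ∀ i j, 0 ≤ R i j)
    (hsub : ∀ i, ∑ j, R i j ≤ 1) (hout : OutflowConnected R) :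
    ∃ d : ι → ℝ, ∃ μ > 0, (∀ i, 0 < d i) ∧
      ∀ e, μ * ∑ i, e i ^ 2 ≤ ∑ i, d i * e i * ((1 - Rᵀ) *ᵥ e) i := by
  obtain ⟨M, hM⟩ := exists_pow_mulVec_one_lt_one hnn hsub hout
  obtain ⟨z, hz, hRz⟩ := exists_pos_mulVec_lt hnn hM
  obtain ⟨N, hN⟩ := exists_transpose_pow_mulVec_one_lt_one hnn hM
  obtain ⟨w, hw, hRw⟩ := exists_pos_mulVec_lt (fun i j => hnn j i) hN
  obtain ⟨μ, hμ, hcoer⟩ := exists_coercive_one_sub_transpose_of_mulVec_lt hnn hz hw hRz hRw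
  exact ⟨fun i => z i / w i, μ, hμ, fun i => div_pos (hz i) (hw i), hcoer⟩

end Matrix

noncomputable def potential (f : ℝ → ℝ) (a ξ : ℝ) : ℝ := ∫ s in a..ξ, (f s - f a)

section Potential

variable {f : ℝ → ℝ} {a : ℝ}

lemma hasDerivAt_potential (hf : Continuous f) (ξ : ℝ) :
    HasDerivAt (potential f a) (f ξ - f a) ξ :=
  ((hf.sub continuous_const).integral_hasStrictDerivAt a ξ).hasDerivAt

lemma potential_add_mul_sub_le (hf : Continuous f) (hmono : Monotone f) (b ξ : ℝ) :
    potential f a b + (f b - f a) * (ξ - b) ≤ potential f a ξ := by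
  have hint : ∀ c d, IntervalIntegrable (fun s => f s - f a) MeasureTheory.volume c d :=
    fun c d => (hf.sub continuous_const).intervalIntegrable c d
  have hdiff : potential f a ξ - potential f a b - (f b - f a) * (ξ - b)
      = ∫ s in b..ξ, (f s - f b) := by
    rw [potential, potential, intervalIntegral.integral_interval_sub_left (hint _ _) (hint _ _),
      intervalIntegral.integral_sub (hf.intervalIntegrable _ _) intervalIntegrable_const,
      intervalIntegral.integral_sub (hf.intervalIntegrable _ _) intervalIntegrable_const]
    simp only [intervalIntegral.integral_const, smul_eq_mul]
    ring
  have hnonneg : 0 ≤ ∫ s in b..ξ, (f s - f b) := by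
    rcases le_total b ξ with h | h
    · exact intervalIntegral.integral_nonneg h fun s hs => sub_nonneg.2 (hmono hs.1)
    · rw [intervalIntegral.integral_symm, ← intervalIntegral.integral_neg]
      exact intervalIntegral.integral_nonneg h fun s hs => by
        simpa using hmono hs.2
  linarith

lemma potential_nonneg (hf : Continuous f) (hmono : Monotone f) (ξ : ℝ) :
    0 ≤ potential f a ξ := by
  simpa [potential] using potential_add_mul_sub_le (a := a) hf hmono a ξ

lemma potential_le_mul (hf : Continuous f) (hmono : Monotone f) (ξ : ℝ) :
    potential f a ξ ≤ (ξ - a) * (f ξ - f a) := by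
  have := potential_add_mul_sub_le (a := a) hf hmono ξ a
  simp only [potential, intervalIntegral.integral_same] at this ⊢
  linarith

lemma exists_pos_mul_abs_sub_le_potential (hf : Continuous f) (hmono : StrictMono f) {h : ℝ}
    (hh : 0 < h) : ∃ δ > 0, ∀ ξ, δ * (|ξ - a| - h) ≤ potential f a ξ := by
  set δ := min (f (a + h) - f a) (f a - f (a - h))
  have hδ : 0 < δ := lt_min (sub_pos.2 (hmono (by linarith))) (sub_pos.2 (hmono (by linarith)))
  refine ⟨δ, hδ, fun ξ => ?_⟩
  have hP := potential_nonneg (a := a) hf hmono.monotone ξ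
  rcases le_or_gt (|ξ - a|) h with hξ | hξ
  · nlinarith
  have hright := potential_add_mul_sub_le (a := a) hf hmono.monotone (a + h) ξ
  have hleft := potential_add_mul_sub_le (a := a) hf hmono.monotone (a - h) ξ
  have := potential_nonneg (a := a) hf hmono.monotone (a + h)
  have := potential_nonneg (a := a) hf hmono.monotone (a - h)
  have h1 : δ ≤ f (a + h) - f a := min_le_left _ _
  have h2 : δ ≤ f a - f (a - h) := min_le_right _ _
  rcases le_abs'.1 hξ.le with hξ' | hξ'
  · rw [abs_of_neg (by linarith)]
    nlinarith
  · rw [abs_of_pos (by linarith)]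
    nlinarith

lemma tendsto_of_tendsto_potential (hf : Continuous f) (hmono : StrictMono f) {α : Type*}
    {l : Filter α} {g : α → ℝ} (hg : Tendsto (fun t => potential f a (g t)) l (𝓝 0)) :
    Tendsto g l (𝓝 a) := by
  rw [Metric.tendsto_nhds]
  intro ε hε
  obtain ⟨δ, hδ, hP⟩ := exists_pos_mul_abs_sub_le_potential (a := a) hf hmono (half_pos hε)
  filter_upwards [hg.eventually (gt_mem_nhds (mul_pos hδ (half_pos hε)))] with t ht
  have := (hP (g t)).trans_lt ht
  rw [Real.dist_eq]
  linarith [lt_of_mul_lt_mul_left this hδ.le]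

end Potential

section WeightedPotential

variable {ι : Type*} [Fintype ι]

noncomputable def weightedPotential (d : ι → ℝ) (f : ι → ℝ → ℝ) (a y : ι → ℝ) : ℝ :=
  ∑ i, d i * potential (f i) (a i) (y i)

variable {d : ι → ℝ} {f : ι → ℝ → ℝ} {a : ι → ℝ}

lemma hasDerivAt_weightedPotential_comp (hf : ∀ i, Continuous (f i)) {x : ℝ → ι → ℝ}
    {x' : ι → ℝ} {t : ℝ} (hx : HasDerivAt x x' t) :
    HasDerivAt (fun t => weightedPotential d f a (x t))
      (∑ i, d i * (f i (x t i) - f i (a i)) * x' i) t := by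
  simp only [weightedPotential, mul_assoc]
  exact HasDerivAt.fun_sum fun i _ =>
    ((hasDerivAt_potential (hf i) _).comp t (hasDerivAt_pi.1 hx i)).const_mul (d i)

lemma mul_potential_le_weightedPotential (hd : ∀ i, 0 ≤ d i) (hf : ∀ i, Continuous (f i))
    (hmono : ∀ i, Monotone (f i)) (y : ι → ℝ) (i : ι) :
    d i * potential (f i) (a i) (y i) ≤ weightedPotential d f a y :=
  Finset.single_le_sum (f := fun i => d i * potential (f i) (a i) (y i))
    (fun j _ => mul_nonneg (hd j) (potential_nonneg (hf j) (hmono j) _)) (Finset.mem_univ i)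

lemma weightedPotential_nonneg (hd : ∀ i, 0 ≤ d i) (hf : ∀ i, Continuous (f i))
    (hmono : ∀ i, Monotone (f i)) (y : ι → ℝ) : 0 ≤ weightedPotential d f a y :=
  Finset.sum_nonneg fun i _ => mul_nonneg (hd i) (potential_nonneg (hf i) (hmono i) _)

lemma weightedPotential_sq_le (hd : ∀ i, 0 ≤ d i) (hf : ∀ i, Continuous (f i))
    (hmono : ∀ i, Monotone (f i)) {y B : ι → ℝ} (hB : ∀ i, |y i - a i| ≤ B i) :
    weightedPotential d f a y ^ 2
      ≤ (∑ i, (d i * B i) ^ 2) * ∑ i, (f i (y i) - f i (a i)) ^ 2 := by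
  have hle : weightedPotential d f a y ≤ ∑ i, d i * B i * |f i (y i) - f i (a i)| :=
    Finset.sum_le_sum fun i _ => by
      rw [mul_assoc]
      refine mul_le_mul_of_nonneg_left ?_ (hd i)
      calc potential (f i) (a i) (y i) ≤ (y i - a i) * (f i (y i) - f i (a i)) :=
            potential_le_mul (hf i) (hmono i) _
        _ ≤ |y i - a i| * |f i (y i) - f i (a i)| := by rw [← abs_mul]; exact le_abs_self _
        _ ≤ B i * |f i (y i) - f i (a i)| := by gcongr; exact hB i
  calc weightedPotential d f a y ^ 2 ≤ (∑ i, d i * B i * |f i (y i) - f i (a i)|) ^ 2 :=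
        pow_le_pow_left₀ (weightedPotential_nonneg hd hf hmono y) hle 2
    _ ≤ (∑ i, (d i * B i) ^ 2) * ∑ i, |f i (y i) - f i (a i)| ^ 2 :=
        Finset.sum_mul_sq_le_sq_mul_sq _ _ _
    _ = (∑ i, (d i * B i) ^ 2) * ∑ i, (f i (y i) - f i (a i)) ^ 2 := by simp only [sq_abs]

lemma exists_abs_sub_le_of_weightedPotential_le (hd : ∀ i, 0 < d i) (hf : ∀ i, Continuous (f i))
    (hmono : ∀ i, StrictMono (f i)) (L : ℝ) :
    ∃ B : ι → ℝ, ∀ y, weightedPotential d f a y ≤ L → ∀ i, |y i - a i| ≤ B i := by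
  choose δ hδ hP using fun i => exists_pos_mul_abs_sub_le_potential (a := a i) (hf i) (hmono i)
    one_pos
  refine ⟨fun i => 1 + L / (d i * δ i), fun y hy i => ?_⟩
  have hdδ : 0 < d i * δ i := mul_pos (hd i) (hδ i)
  have : d i * δ i * (|y i - a i| - 1) ≤ L := by
    rw [mul_assoc]
    exact (mul_le_mul_of_nonneg_left (hP i (y i)) (hd i).le).trans
      ((mul_potential_le_weightedPotential (fun j => (hd j).le) hf
        (fun j => (hmono j).monotone) y i).trans hy)
  rw [← le_div_iff₀' hdδ] at this
  linarith

lemma tendsto_of_tendsto_weightedPotential (hd : ∀ i, 0 < d i) (hf : ∀ i, Continuous (f i))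
    (hmono : ∀ i, StrictMono (f i)) {α : Type*} {l : Filter α} {g : α → ι → ℝ}
    (hg : Tendsto (fun t => weightedPotential d f a (g t)) l (𝓝 0)) : Tendsto g l (𝓝 a) := by
  refine tendsto_pi_nhds.2 fun i => tendsto_of_tendsto_potential (hf i) (hmono i) ?_
  refine squeeze_zero (fun t => potential_nonneg (hf i) (hmono i).monotone _)
    (fun t => ?_) (by simpa using hg.div_const (d i))
  rw [le_div_iff₀' (hd i)]
  exact mul_potential_le_weightedPotential (fun j => (hd j).le) hf (fun j => (hmono j).monotone) _ i

end WeightedPotential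

lemma antitoneOn_Ici_of_hasDerivAt_nonpos {V V' : ℝ → ℝ} {t₀ : ℝ}
    (hder : ∀ t ≥ t₀, HasDerivAt V (V' t) t) (hle : ∀ t ≥ t₀, V' t ≤ 0) :
    AntitoneOn V (Set.Ici t₀) :=
  antitoneOn_of_hasDerivWithinAt_nonpos (convex_Ici t₀)
    (fun t ht => (hder t ht).continuousAt.continuousWithinAt)
    (fun t ht => (hder t (interior_subset ht)).hasDerivWithinAt)
    (fun t ht => hle t (interior_subset ht))

lemma tendsto_zero_of_hasDerivAt_le_neg_mul_sq {V V' : ℝ → ℝ} {k : ℝ} (hk : 0 < k)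
    (hV : ∀ t ≥ 0, 0 ≤ V t) (hder : ∀ t ≥ 0, HasDerivAt V (V' t) t)
    (hle : ∀ t ≥ 0, V' t ≤ -(k * V t ^ 2)) : Tendsto V atTop (𝓝 0) := by
  have hanti := antitoneOn_Ici_of_hasDerivAt_nonpos hder fun t ht =>
    (hle t ht).trans (neg_nonpos.2 (by have := hV t ht; positivity))
  refine tendsto_order.2 ⟨fun b hb => eventually_atTop.2 ⟨0, fun t ht => hb.trans_le (hV t ht)⟩,
    fun ε hε => ?_⟩
  -- if `V ≥ ε` on `[0, ∞)` then `V t + k ε² t` decreases, which fails for `t > V 0 / (k ε²)`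
  obtain ⟨T, hT, hVT⟩ : ∃ T ≥ 0, V T < ε := by
    by_contra! hge
    have hkε : 0 < k * ε ^ 2 := by positivity
    have hG := antitoneOn_Ici_of_hasDerivAt_nonpos (V := fun t => V t + k * ε ^ 2 * t)
      (fun t ht => (hder t ht).add ((hasDerivAt_id t).const_mul (k * ε ^ 2)))
      fun t ht => by
        have := hle t ht
        have := mul_le_mul_of_nonneg_left (pow_le_pow_left₀ hε.le (hge t ht) 2) hk.le
        linarith
    set T := V 0 / (k * ε ^ 2) + 1
    have hT : 0 ≤ T := by have := hV 0 le_rfl; positivity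
    have := hG (Set.mem_Ici.2 le_rfl) hT hT
    have hkT : k * ε ^ 2 * T = V 0 + k * ε ^ 2 := by
      rw [mul_add, mul_div_cancel₀ _ hkε.ne', mul_one]
    simp only [mul_zero, add_zero] at this
    linarith [hge T hT]
  exact eventually_atTop.2 ⟨T, fun t ht => (hanti hT (hT.trans ht) ht).trans_lt hVT⟩

theorem tendsto_of_hasDerivAt_neg_mulVec_sub {ι : Type*} [Fintype ι] {A : Matrix ι ι ℝ}
    {d : ι → ℝ} {μ : ℝ} (hd : ∀ i, 0 < d i) (hμ : 0 < μ)
    (hA : ∀ e, μ * ∑ i, e i ^ 2 ≤ ∑ i, d i * e i * (A *ᵥ e) i)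
    {f : ι → ℝ → ℝ} (hf : ∀ i, Continuous (f i)) (hmono : ∀ i, StrictMono (f i))
    {a : ι → ℝ} {x : ℝ → ι → ℝ}
    (hx : ∀ t ≥ 0, HasDerivAt x (-(A *ᵥ fun i => f i (x t i) - f i (a i))) t) :
    Tendsto x atTop (𝓝 a) := by
  have hd₀ : ∀ i, 0 ≤ d i := fun i => (hd i).le
  have hmono₀ : ∀ i, Monotone (f i) := fun i => (hmono i).monotone
  set W := fun t => weightedPotential d f a (x t)
  set E := fun t i => f i (x t i) - f i (a i)
  have hder : ∀ t ≥ 0, HasDerivAt W (-∑ i, d i * E t i * (A *ᵥ E t) i) t := fun t ht => by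
    simpa [E, Finset.sum_neg_distrib] using hasDerivAt_weightedPotential_comp hf (hx t ht)
  have hdecr : ∀ t ≥ 0, -∑ i, d i * E t i * (A *ᵥ E t) i ≤ -(μ * ∑ i, E t i ^ 2) :=
    fun t _ => neg_le_neg (hA (E t))
  have hanti : AntitoneOn W (Set.Ici 0) := antitoneOn_Ici_of_hasDerivAt_nonpos hder fun t ht =>
    (hdecr t ht).trans (neg_nonpos.2 (by positivity))
  obtain ⟨B, hB⟩ := exists_abs_sub_le_of_weightedPotential_le (a := a) hd hf hmono (W 0)
  set K := ∑ i, (d i * B i) ^ 2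
  refine tendsto_of_tendsto_weightedPotential hd hf hmono
    (tendsto_zero_of_hasDerivAt_le_neg_mul_sq (k := μ / (K + 1)) (by positivity)
      (fun t _ => weightedPotential_nonneg hd₀ hf hmono₀ _) hder fun t ht => ?_)
  have hsq : W t ^ 2 ≤ (K + 1) * ∑ i, E t i ^ 2 :=
    (weightedPotential_sq_le hd₀ hf hmono₀ (hB _ (hanti (Set.mem_Ici.2 le_rfl) ht ht))).trans
      (by gcongr; linarith)
  refine (hdecr t ht).trans (neg_le_neg ?_)
  rw [div_mul_eq_mul_div, div_le_iff₀ (by positivity)]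
  nlinarith

lemma StrictMonoOn.exists_continuous_strictMono_eqOn_Ici {φ : ℝ → ℝ}
    (hcont : ContinuousOn φ (Set.Ici 0)) (hmono : StrictMonoOn φ (Set.Ici 0)) :
    ∃ ψ : ℝ → ℝ, Continuous ψ ∧ StrictMono ψ ∧ Set.EqOn ψ φ (Set.Ici 0) := by
  refine ⟨fun y => φ (max y 0) + min y 0, ?_, fun y y' hyy' => ?_, fun y hy => ?_⟩
  · exact (hcont.comp_continuous (continuous_id.max continuous_const)
      fun y => le_max_right y 0).add (continuous_id.min continuous_const)
  · rcases le_or_gt y' 0 with hy' | hy'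
    · simp [max_eq_right hy', max_eq_right (hyy'.le.trans hy'), min_eq_left hy',
        min_eq_left (hyy'.le.trans hy'), hyy']
    · have : max y 0 < max y' 0 := by rw [max_eq_left hy'.le]; exact max_lt hyy' hy'
      exact add_lt_add_of_lt_of_le (hmono (le_max_right y 0) (le_max_right y' 0) this)
        (min_le_min_right 0 hyy'.le)
  · simp [max_eq_left (Set.mem_Ici.1 hy), min_eq_right (Set.mem_Ici.1 hy)]

lemma strictMonoOn_Ici_of_derivWithin_pos {φ : ℝ → ℝ} (hcont : ContinuousOn φ (Set.Ici 0))
    (hpos : ∀ y ≥ (0 : ℝ), 0 < derivWithin φ (Set.Ici 0) y) : StrictMonoOn φ (Set.Ici 0) :=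
  strictMonoOn_of_deriv_pos (convex_Ici 0) hcont fun y hy => by
    rw [interior_Ici] at hy
    rw [← derivWithin_of_mem_nhds (Ici_mem_nhds hy)]
    exact hpos y (le_of_lt hy)

theorem demand_constrained_flow_network_global_stability_general {n : ℕ}
    (R : Matrix (Fin n) (Fin n) ℝ)
    (hnn : ∀ i j, 0 ≤ R i j)
    (hsub : ∀ i, ∑ j, R i j ≤ 1)
    (hout : ∀ i : Fin n, ∃ j : Fin n,
      Relation.ReflTransGen (fun a b => 0 < R a b) i j ∧ ∑ k, R j k < 1)
    (φ : Fin n → ℝ → ℝ)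
    (hφdiff : ∀ i, ContDiffOn ℝ 1 (φ i) (Set.Ici 0))
    (hφ' : ∀ i, ∀ y ≥ (0 : ℝ), 0 < derivWithin (φ i) (Set.Ici 0) y)
    (u : Fin n → ℝ)
    (xstar : Fin n → ℝ) (hxstarnn : ∀ i, 0 ≤ xstar i)
    (hxstar : ∀ i, φ i (xstar i) = (1 - Rᵀ)⁻¹.mulVec u i)
    (x : ℝ → Fin n → ℝ)
    (hode : ∀ t ≥ (0 : ℝ),
      HasDerivAt x (u - (1 - Rᵀ).mulVec (fun i => φ i (x t i))) t)
    (hxnn : ∀ t ≥ (0 : ℝ), ∀ i, 0 ≤ x t i) :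
    Tendsto x atTop (nhds xstar) := by
  obtain ⟨d, μ, hμ, hd, hcoer⟩ := OutflowConnected.exists_coercive_one_sub_transpose hnn hsub hout
  have hequil : (1 - Rᵀ) *ᵥ (fun i => φ i (xstar i)) = u := by
    rw [funext hxstar, mulVec_mulVec,
      mul_nonsing_inv _ (det_ne_zero_of_coercive hμ hcoer).isUnit, one_mulVec]
  choose ψ hψc hψm hψφ using fun i => StrictMonoOn.exists_continuous_strictMono_eqOn_Ici
    (hφdiff i).continuousOn (strictMonoOn_Ici_of_derivWithin_pos (hφdiff i).continuousOn (hφ' i))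
  refine tendsto_of_hasDerivAt_neg_mulVec_sub hd hμ hcoer hψc hψm fun t ht => ?_
  have hψx : (fun i => ψ i (x t i) - ψ i (xstar i))
      = (fun i => φ i (x t i)) - fun i => φ i (xstar i) :=
    funext fun i => by simp [hψφ i (hxnn t ht i), hψφ i (hxstarnn i)]
  rw [hψx, mulVec_sub, hequil, neg_sub]
  exact hode t ht

/-- For a substochastic, outflow-connected routing matrix `R`, continuously
differentiable demand functions `φ_i : [0,∞) → [0,∞)` with `φ_i(0) = 0`, strictly positive
derivative, and supremum `C_i ∈ (0,∞)`, and a nonnegative inflow `u` such that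
`z* = (I − Rᵀ)⁻¹ u` satisfies `z*_i < C_i` for all `i`, the unique point `x* ≥ 0` with
`φ_i(x*_i) = z*_i` is a globally asymptotically stable equilibrium of
`ẋ = u − (I − Rᵀ)φ(x)` on the nonnegative orthant: every solution staying in the orthant
converges to `x*`. -/
theorem demand_constrained_flow_network_global_stability {n : ℕ}
    (R : Matrix (Fin n) (Fin n) ℝ)
    (hnn : ∀ i j, 0 ≤ R i j)
    (hsub : ∀ i, ∑ j, R i j ≤ 1)
    (hout : ∀ i : Fin n, ∃ j : Fin n,
      Relation.ReflTransGen (fun a b => 0 < R a b) i j ∧ ∑ k, R j k < 1)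
    (φ : Fin n → ℝ → ℝ) (C : Fin n → ℝ)
    (hφdiff : ∀ i, ContDiffOn ℝ 1 (φ i) (Set.Ici 0))
    (hφ' : ∀ i, ∀ y ≥ (0 : ℝ), 0 < derivWithin (φ i) (Set.Ici 0) y)
    (hφ0 : ∀ i, φ i 0 = 0)
    (hφnn : ∀ i, ∀ y ≥ (0 : ℝ), 0 ≤ φ i y)
    (hφsup : ∀ i, IsLUB (φ i '' Set.Ici 0) (C i))
    (hC : ∀ i, 0 < C i)
    (u : Fin n → ℝ) (hu : ∀ i, 0 ≤ u i)
    (hz : ∀ i, (1 - Rᵀ)⁻¹.mulVec u i < C i)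
    (xstar : Fin n → ℝ) (hxstarnn : ∀ i, 0 ≤ xstar i)
    (hxstar : ∀ i, φ i (xstar i) = (1 - Rᵀ)⁻¹.mulVec u i)
    (x : ℝ → Fin n → ℝ)
    (hode : ∀ t ≥ (0 : ℝ),
      HasDerivAt x (u - (1 - Rᵀ).mulVec (fun i => φ i (x t i))) t)
    (hxnn : ∀ t ≥ (0 : ℝ), ∀ i, 0 ≤ x t i) :
    Tendsto x atTop (nhds xstar) :=
  demand_constrained_flow_network_global_stability_general R hnn hsub hout φ hφdiff hφ' u xstar
    hxstarnn hxstar x hode hxnn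
end

section
/- Let (I, A, R, S) be a network topology with cell set I = {1,…,n}, link set A ⊆ I×I, inflow set R ⊆ I, and outflow set S ⊆ I, let C ∈ ℝⁿ₊ be a vector of flow capacities, and let u ∈ ℝⁿ₊ with u_i = 0 for i ∉ R. For J ⊆ I, say a cell i ∉ J is outflow-connected avoiding J if either i ∈ S, or there is a directed path i = v_0, v_1, …, v_l in (I, A) with all v_h ∉ J and v_l ∈ S; let K_J = J ∪ {i ∉ J : i is not outflow-connected avoiding J}. Suppose Σ_{j∈J} C_j < Σ_{k∈K_J} u_k. Then for any functions F : [0,∞) → ℝ₊^{n×n} with F_{ij}(t) = 0 whenever (i,j) ∉ A, w : [0,∞) → ℝⁿ₊ with w_i(t) = 0 whenever i ∉ S, satisfying the capacity constraint Σ_j F_{ij}(t) + w_i(t) ≤ C_i for all i and t, every differentiable x : [0,∞) → ℝⁿ with ẋ(t) = u + F(t)ᵀ𝟙 − F(t)𝟙 − w(t) satisfies Σ_{k∈K_J} x_k(t) ≥ Σ_{k∈K_J} x_k(0) + t·(Σ_{k∈K_J} u_k − Σ_{j∈J} C_j) for all t ≥ 0; in particular x is unbounded in time. -/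
/-!
Let `K` be the cut `J` together with the cells that cannot reach the outflow set `Ss` while
avoiding `J`. A cell of `K \ J` has no external outflow and all its links stay inside `K`, so mass
can only leave `K` through the cells of `J`, at total rate at most `Σ_{j∈J} C_j`, while it enters
at rate at least `Σ_{k∈K} u_k` (flows between cells of `K` cancel). Hence the mass in `K` grows at
least linearly with slope `Σ_{k∈K} u_k − Σ_{j∈J} C_j > 0`.
-/

open Matrix Filter Finset

section FlowBalance

variable {ι : Type*} [Fintype ι] [DecidableEq ι]

theorem sum_inflow_sub_outflow_eq (F : Matrix ι ι ℝ) (K : Finset ι) :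
    ∑ k ∈ K, ((∑ j, F j k) - ∑ j, F k j) =
      (∑ k ∈ K, ∑ j ∈ Kᶜ, F j k) - ∑ k ∈ K, ∑ j ∈ Kᶜ, F k j := by
  have hsplit (f : ι → ι → ℝ) :
      ∑ k ∈ K, ∑ j, f j k = (∑ k ∈ K, ∑ j ∈ K, f j k) + ∑ k ∈ K, ∑ j ∈ Kᶜ, f j k := by
    rw [← sum_add_distrib]
    exact sum_congr rfl fun k _ => (sum_add_sum_compl K _).symm
  have hinternal : ∑ k ∈ K, ∑ j ∈ K, F j k = ∑ k ∈ K, ∑ j ∈ K, F k j := sum_comm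
  rw [sum_sub_distrib, hsplit F, hsplit fun j k => F k j]
  linarith

open scoped Classical in
/-- The set `K_J` of the paper. -/
noncomputable def cutClosure (A : Set (ι × ι)) (Ss : Set ι) (J : Finset ι) : Finset ι :=
  univ.filter (fun i => i ∈ J ∨
    ¬ ∃ s ∈ Ss, Relation.ReflTransGen (fun a b : ι => (a, b) ∈ A ∧ a ∉ J ∧ b ∉ J) i s)

variable {A : Set (ι × ι)} {Ss : Set ι} {J : Finset ι}

theorem mem_cutClosure {k : ι} : k ∈ cutClosure A Ss J ↔ k ∈ J ∨
    ¬ ∃ s ∈ Ss, Relation.ReflTransGen (fun a b : ι => (a, b) ∈ A ∧ a ∉ J ∧ b ∉ J) k s := by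
  simp [cutClosure]

theorem subset_cutClosure : J ⊆ cutClosure A Ss J :=
  fun _ hj => mem_cutClosure.2 (Or.inl hj)

theorem not_reaches_of_mem_cutClosure {k : ι} (hkK : k ∈ cutClosure A Ss J) (hkJ : k ∉ J) :
    ¬ ∃ s ∈ Ss, Relation.ReflTransGen (fun a b : ι => (a, b) ∈ A ∧ a ∉ J ∧ b ∉ J) k s :=
  (mem_cutClosure.1 hkK).resolve_left hkJ

theorem notMem_outflow_of_mem_cutClosure {k : ι} (hkK : k ∈ cutClosure A Ss J) (hkJ : k ∉ J) :
    k ∉ Ss :=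
  fun hkS => not_reaches_of_mem_cutClosure hkK hkJ ⟨k, hkS, .refl⟩

theorem mem_cutClosure_of_link {k j : ι} (hkK : k ∈ cutClosure A Ss J) (hkJ : k ∉ J)
    (hkj : (k, j) ∈ A) : j ∈ cutClosure A Ss J := by
  by_contra hjK
  simp only [mem_cutClosure, not_or, not_not] at hjK
  obtain ⟨hjJ, s, hsS, hjs⟩ := hjK
  exact not_reaches_of_mem_cutClosure hkK hkJ ⟨s, hsS, .head ⟨hkj, hkJ, hjJ⟩ hjs⟩

variable {F : Matrix ι ι ℝ} {w C : ι → ℝ}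

theorem outflow_eq_zero_of_mem_cutClosure
    (hFA : ∀ i j, (i, j) ∉ A → F i j = 0) (hwS : ∀ i, i ∉ Ss → w i = 0)
    {k : ι} (hkK : k ∈ cutClosure A Ss J) (hkJ : k ∉ J) :
    (∑ j ∈ (cutClosure A Ss J)ᶜ, F k j) + w k = 0 := by
  have hF : ∀ j ∈ (cutClosure A Ss J)ᶜ, F k j = 0 := fun j hj =>
    hFA k j fun hkj => mem_compl.1 hj (mem_cutClosure_of_link hkK hkJ hkj)
  rw [sum_eq_zero hF, hwS k (notMem_outflow_of_mem_cutClosure hkK hkJ), add_zero]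

theorem sum_outflow_cutClosure_le (hFnn : ∀ i j, 0 ≤ F i j)
    (hFA : ∀ i j, (i, j) ∉ A → F i j = 0) (hwS : ∀ i, i ∉ Ss → w i = 0)
    (hcap : ∀ i, (∑ j, F i j) + w i ≤ C i) :
    ∑ k ∈ cutClosure A Ss J, ((∑ j ∈ (cutClosure A Ss J)ᶜ, F k j) + w k) ≤ ∑ j ∈ J, C j := by
  rw [← sum_subset subset_cutClosure fun k hkK hkJ =>
    outflow_eq_zero_of_mem_cutClosure hFA hwS hkK hkJ]
  refine sum_le_sum fun k _ => le_trans ?_ (hcap k)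
  gcongr ?_ + _
  exact sum_le_sum_of_subset_of_nonneg (subset_univ _) fun j _ _ => hFnn k j

theorem sub_le_sum_netInflow_cutClosure (u : ι → ℝ) (hFnn : ∀ i j, 0 ≤ F i j)
    (hFA : ∀ i j, (i, j) ∉ A → F i j = 0) (hwS : ∀ i, i ∉ Ss → w i = 0)
    (hcap : ∀ i, (∑ j, F i j) + w i ≤ C i) :
    (∑ k ∈ cutClosure A Ss J, u k) - ∑ j ∈ J, C j ≤
      ∑ k ∈ cutClosure A Ss J, (u k + (∑ j, F j k) - (∑ j, F k j) - w k) := by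
  set K := cutClosure A Ss J
  have hbalance : ∑ k ∈ K, (u k + (∑ j, F j k) - (∑ j, F k j) - w k) =
      (∑ k ∈ K, u k) + (∑ k ∈ K, ∑ j ∈ Kᶜ, F j k) - ∑ k ∈ K, ((∑ j ∈ Kᶜ, F k j) + w k) := by
    have := sum_inflow_sub_outflow_eq F K
    simp only [sum_add_distrib, sum_sub_distrib] at this ⊢
    linarith
  have hinflow : 0 ≤ ∑ k ∈ K, ∑ j ∈ Kᶜ, F j k :=
    sum_nonneg fun k _ => sum_nonneg fun j _ => hFnn j k
  have houtflow := sum_outflow_cutClosure_le hFnn hFA hwS hcap (J := J)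
  linarith

end FlowBalance

theorem add_mul_le_of_le_deriv {y y' : ℝ → ℝ} {c : ℝ}
    (hy : ∀ t ≥ (0 : ℝ), HasDerivAt y (y' t) t) (hc : ∀ t ≥ (0 : ℝ), c ≤ y' t) :
    ∀ t ≥ (0 : ℝ), y 0 + t * c ≤ y t := by
  intro t ht
  have hmvt := (convex_Ici (0 : ℝ)).mul_sub_le_image_sub_of_le_deriv
    (fun s hs => (hy s hs).continuousAt.continuousWithinAt)
    (fun s hs => (hy s (interior_subset hs)).differentiableAt.differentiableWithinAt)
    (fun s hs => (hy s (interior_subset hs)).deriv ▸ hc s (interior_subset hs))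
    0 Set.self_mem_Ici t ht ht
  linarith

theorem exists_gt_of_add_mul_le {f : ℝ → ℝ} {a c : ℝ} (hc : 0 < c)
    (hf : ∀ t ≥ (0 : ℝ), a + t * c ≤ f t) (B : ℝ) : ∃ t ≥ (0 : ℝ), B < f t := by
  have hlin : Tendsto (fun t => a + t * c) atTop atTop :=
    tendsto_atTop_add_const_left _ a (tendsto_id.atTop_mul_const hc)
  have hf_top : Tendsto f atTop atTop :=
    tendsto_atTop_mono' _ ((eventually_ge_atTop 0).mono hf) hlin
  exact ((eventually_ge_atTop 0).and (hf_top.eventually_gt_atTop B)).exists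

open scoped Classical in
theorem cut_capacity_violation_instability_general {n : ℕ}
    (A : Set (Fin n × Fin n)) (Ss : Set (Fin n))
    (C u : Fin n → ℝ)
    (J : Finset (Fin n))
    (K : Finset (Fin n))
    (hK : K = Finset.univ.filter (fun i => i ∈ J ∨
      ¬ ∃ s ∈ Ss, Relation.ReflTransGen
        (fun a b : Fin n => (a, b) ∈ A ∧ a ∉ J ∧ b ∉ J) i s))
    (hcut : ∑ j ∈ J, C j < ∑ k ∈ K, u k)
    (F : ℝ → Matrix (Fin n) (Fin n) ℝ) (w : ℝ → Fin n → ℝ)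
    (hFnn : ∀ t ≥ (0 : ℝ), ∀ i j, 0 ≤ F t i j)
    (hFA : ∀ t ≥ (0 : ℝ), ∀ i j, (i, j) ∉ A → F t i j = 0)
    (hwS : ∀ t ≥ (0 : ℝ), ∀ i, i ∉ Ss → w t i = 0)
    (hcap : ∀ t ≥ (0 : ℝ), ∀ i, (∑ j, F t i j) + w t i ≤ C i)
    (x : ℝ → Fin n → ℝ)
    (hode : ∀ t ≥ (0 : ℝ), HasDerivAt x
      (fun i => u i + (∑ j, F t j i) - (∑ j, F t i j) - w t i) t) :
    (∀ t ≥ (0 : ℝ),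
      (∑ k ∈ K, x 0 k) + t * ((∑ k ∈ K, u k) - ∑ j ∈ J, C j) ≤ ∑ k ∈ K, x t k) ∧
    ¬ ∃ M : ℝ, ∀ t ≥ (0 : ℝ), ‖x t‖ ≤ M := by
  obtain rfl : K = cutClosure A Ss J := by
    rw [hK]
    ext
    simp [mem_cutClosure]
  have hmass : ∀ t ≥ (0 : ℝ), HasDerivAt (fun t => ∑ k ∈ cutClosure A Ss J, x t k)
      (∑ k ∈ cutClosure A Ss J, (u k + (∑ j, F t j k) - (∑ j, F t k j) - w t k)) t :=
    fun t ht => HasDerivAt.fun_sum fun k _ => hasDerivAt_pi.1 (hode t ht) k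
  have hgrowth := add_mul_le_of_le_deriv hmass fun t ht =>
    sub_le_sum_netInflow_cutClosure u (hFnn t ht) (hFA t ht) (hwS t ht) (hcap t ht)
  refine ⟨hgrowth, fun ⟨M, hM⟩ => ?_⟩
  obtain ⟨t, ht, hMt⟩ :=
    exists_gt_of_add_mul_le (sub_pos.2 hcut) hgrowth (#(cutClosure A Ss J) * M)
  have hbound : ∑ k ∈ cutClosure A Ss J, x t k ≤ #(cutClosure A Ss J) * M := by
    rw [← nsmul_eq_mul]
    exact sum_le_card_nsmul _ _ _ fun k _ =>
      (le_abs_self _).trans ((norm_le_pi_norm (x t) k).trans (hM t ht))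
  exact hbound.not_gt hMt

open scoped Classical in
/-- mass-conservation cut argument. Given a network topology `(I, A, Rs, Ss)` with
flow capacities `C` and external inflow `u` supported on `Rs`, and a cut `J ⊆ I` whose residual
capacity is negative (`Σ_{j∈J} C_j < Σ_{k∈K_J} u_k`, where `K_J` consists of the cells in `J`
together with those that are not outflow-connected avoiding `J`), every trajectory of the mass
conservation law `ẋ = u + Fᵀ𝟙 − F𝟙 − w`, with flows supported on `A`, outflows supported on
`Ss`, and total outflow from each cell bounded by its capacity, satisfies
`Σ_{k∈K_J} x_k(t) ≥ Σ_{k∈K_J} x_k(0) + t (Σ_{k∈K_J} u_k − Σ_{j∈J} C_j)`; in particular it is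
unbounded in time. -/
theorem cut_capacity_violation_instability {n : ℕ}
    (A : Set (Fin n × Fin n)) (Rs Ss : Set (Fin n))
    (C u : Fin n → ℝ)
    (hC : ∀ i, 0 ≤ C i) (hu : ∀ i, 0 ≤ u i)
    (huR : ∀ i, i ∉ Rs → u i = 0)
    (J : Finset (Fin n))
    (K : Finset (Fin n))
    (hK : K = Finset.univ.filter (fun i => i ∈ J ∨
      ¬ ∃ s ∈ Ss, Relation.ReflTransGen
        (fun a b : Fin n => (a, b) ∈ A ∧ a ∉ J ∧ b ∉ J) i s))
    (hcut : ∑ j ∈ J, C j < ∑ k ∈ K, u k)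
    (F : ℝ → Matrix (Fin n) (Fin n) ℝ) (w : ℝ → Fin n → ℝ)
    (hFnn : ∀ t ≥ (0 : ℝ), ∀ i j, 0 ≤ F t i j)
    (hFA : ∀ t ≥ (0 : ℝ), ∀ i j, (i, j) ∉ A → F t i j = 0)
    (hwnn : ∀ t ≥ (0 : ℝ), ∀ i, 0 ≤ w t i)
    (hwS : ∀ t ≥ (0 : ℝ), ∀ i, i ∉ Ss → w t i = 0)
    (hcap : ∀ t ≥ (0 : ℝ), ∀ i, (∑ j, F t i j) + w t i ≤ C i)
    (x : ℝ → Fin n → ℝ)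
    (hode : ∀ t ≥ (0 : ℝ), HasDerivAt x
      (fun i => u i + (∑ j, F t j i) - (∑ j, F t i j) - w t i) t) :
    (∀ t ≥ (0 : ℝ),
      (∑ k ∈ K, x 0 k) + t * ((∑ k ∈ K, u k) - ∑ j ∈ J, C j) ≤ ∑ k ∈ K, x t k) ∧
    ¬ ∃ M : ℝ, ∀ t ≥ (0 : ℝ), ‖x t‖ ≤ M :=
  cut_capacity_violation_instability_general A Ss C u J K hK hcut F w hFnn hFA hwS hcap x hode
end
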